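/- arXiv:2202.10618 — 2 statements merged into one kernel-verified Lean document; each statement's English description precedes it below -/
import Mathlib

section
/- Let Q be a chi-squared random variable with k degrees of freedom. Then for any x > 0: Pr[Q/k ≤ 1 − 2√(x/k)] ≤ exp(−x) and Pr[Q/k ≥ 1 + 2√(x/k) + 2x/k] ≤ exp(−x). -/
open MeasureTheory ProbabilityTheory ENNReal

/-- Two measures are `(ε,δ)`-close (differential-privacy style indistinguishability). -/
def DPClose {Ω : Type*} [MeasurableSpace Ω] (ε δ : ℝ) (P Q : Measure Ω) : Prop :=
  ∀ s : Set Ω, MeasurableSet s →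
    P s ≤ ENNReal.ofReal (Real.exp ε) * Q s + ENNReal.ofReal δ ∧
    Q s ≤ ENNReal.ofReal (Real.exp ε) * P s + ENNReal.ofReal δ

/-- Euclidean norm of a vector in `ℝ^d`. -/
noncomputable def vnorm {d : ℕ} (x : Fin d → ℝ) : ℝ :=
  Real.sqrt (∑ i, (x i) ^ 2)

/-- Isotropic Gaussian measure on `ℝ^d` with mean `μ` and per-coordinate variance `v`. -/
noncomputable def gaussVec (d : ℕ) (μ : Fin d → ℝ) (v : NNReal) : Measure (Fin d → ℝ) :=
  Measure.pi fun i => gaussianReal (μ i) v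

/-- Random `k × d` matrix with i.i.d. centered Gaussian entries of variance `v`. -/
noncomputable def gaussMat (k d : ℕ) (v : NNReal) : Measure (Fin k → Fin d → ℝ) :=
  Measure.pi fun _ => Measure.pi fun _ => gaussianReal 0 v

/-- Matrix-vector product. -/
def matVec {k d : ℕ} (W : Fin k → Fin d → ℝ) (x : Fin d → ℝ) : Fin k → ℝ :=
  fun i => ∑ j, W i j * x j

/-- Chi-squared distribution with `k` degrees of freedom: the law of the sum of
squares of `k` independent standard normals. -/
noncomputable def chiSq (k : ℕ) : Measure ℝ :=
  (Measure.pi fun _ : Fin k => gaussianReal 0 1).map (fun g => ∑ i, (g i) ^ 2)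

/-!
Chernoff's bound for `Q` and `-Q`, using the moment generating function
`E[exp (t Q)] = (1 - 2t)^(-k/2)` for `t < 1/2`. At `t = -u` for the lower tail and
`t = u / (1 + 2u)` for the upper tail, with `u = √(x/k)`, the exponent is at most `-k u² = -x`
by the elementary bounds `y - y²/2 ≤ log (1 + y) ≤ (1 + y - (1 + y)⁻¹) / 2` for `y = 2u ≥ 0`.
-/

open Real Set

lemma Real.sub_sq_div_two_le_log_one_add {y : ℝ} (hy : 0 ≤ y) : y - y ^ 2 / 2 ≤ log (1 + y) := by
  refine le_trans ?_ (le_log_one_add_of_nonneg hy)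
  rw [le_div_iff₀ (by linarith)]
  nlinarith [pow_nonneg hy 3]

lemma Real.log_le_sub_inv_div_two {x : ℝ} (hx : 1 ≤ x) : log x ≤ (x - x⁻¹) / 2 := by
  rw [← sinh_log (by linarith)]
  exact self_le_sinh_iff.mpr (log_nonneg hx)

lemma measurable_sum_sq (k : ℕ) : Measurable fun g : Fin k → ℝ ↦ ∑ i, g i ^ 2 :=
  Finset.measurable_sum _ fun i _ ↦ (measurable_pi_apply i).pow_const 2

instance isProbabilityMeasure_chiSq (k : ℕ) : IsProbabilityMeasure (chiSq k) :=
  Measure.isProbabilityMeasure_map (measurable_sum_sq k).aemeasurable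

section MomentGeneratingFunction

variable {t : ℝ}

lemma integral_exp_mul_sq_gaussianReal (ht : t < 1 / 2) :
    ∫ x, exp (t * x ^ 2) ∂gaussianReal 0 1 = (1 - 2 * t) ^ (-(1 / 2 : ℝ)) := by
  calc ∫ x, exp (t * x ^ 2) ∂gaussianReal 0 1
      = ∫ x, (√(2 * π))⁻¹ * exp (-(1 / 2 - t) * x ^ 2) := by
        rw [integral_gaussianReal_eq_integral_smul one_ne_zero]
        congr 1 with x
        rw [gaussianPDFReal, smul_eq_mul, mul_assoc, ← exp_add]
        push_cast
        ring_nf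
    _ = (√(2 * π))⁻¹ * √(π / (1 / 2 - t)) := by rw [integral_const_mul, integral_gaussian]
    _ = (1 - 2 * t) ^ (-(1 / 2 : ℝ)) := by
        rw [Real.rpow_neg (by linarith), ← sqrt_eq_rpow, ← sqrt_inv, ← sqrt_inv,
          ← sqrt_mul (by positivity)]
        congr 1
        field_simp

-- `integral_exp_mul_sq_gaussianReal` needs no integrability hypothesis, and its value is nonzero.
lemma integrable_exp_mul_sq_gaussianReal (ht : t < 1 / 2) :
    Integrable (fun x ↦ exp (t * x ^ 2)) (gaussianReal 0 1) :=
  .of_integral_ne_zero <| by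
    rw [integral_exp_mul_sq_gaussianReal ht]
    exact (rpow_pos_of_pos (by linarith) _).ne'

lemma integrable_exp_mul_chiSq (k : ℕ) (ht : t < 1 / 2) :
    Integrable (fun q ↦ exp (t * q)) (chiSq k) := by
  rw [chiSq, integrable_map_measure (by fun_prop) (measurable_sum_sq k).aemeasurable]
  simp_rw [Function.comp_def, Finset.mul_sum, exp_sum]
  exact Integrable.fintype_prod fun _ ↦ integrable_exp_mul_sq_gaussianReal ht

lemma mgf_chiSq (k : ℕ) (ht : t < 1 / 2) :
    mgf id (chiSq k) t = (1 - 2 * t) ^ (-(k / 2 : ℝ)) := by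
  rw [chiSq, mgf_id_map (measurable_sum_sq k).aemeasurable, mgf]
  simp_rw [Finset.mul_sum, exp_sum]
  rw [integral_fintype_prod_eq_pow (fun x ↦ exp (t * x ^ 2)),
    integral_exp_mul_sq_gaussianReal ht, Fintype.card_fin, ← Real.rpow_natCast,
    ← Real.rpow_mul (by linarith)]
  ring_nf

lemma chiSq_real_le_le_exp_mul (k : ℕ) (ht : t ≤ 0) (a : ℝ) :
    (chiSq k).real {q | q ≤ a} ≤ exp (-t * a) * (1 - 2 * t) ^ (-(k / 2 : ℝ)) := by
  have h := measure_le_le_exp_mul_mgf (X := id) a ht (integrable_exp_mul_chiSq k (by linarith))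
  rwa [mgf_chiSq k (by linarith)] at h

lemma chiSq_real_ge_le_exp_mul (k : ℕ) (ht₀ : 0 ≤ t) (ht : t < 1 / 2) (a : ℝ) :
    (chiSq k).real {q | a ≤ q} ≤ exp (-t * a) * (1 - 2 * t) ^ (-(k / 2 : ℝ)) := by
  have h := measure_ge_le_exp_mul_mgf (X := id) a ht₀ (integrable_exp_mul_chiSq k ht)
  rwa [mgf_chiSq k ht] at h

end MomentGeneratingFunction

lemma chiSq_lower_tail (k : ℕ) {u : ℝ} (hu : 0 ≤ u) :
    chiSq k {q | q ≤ k * (1 - 2 * u)} ≤ ENNReal.ofReal (exp (-(k * u ^ 2))) := by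
  rw [ENNReal.le_ofReal_iff_toReal_le (measure_ne_top _ _) (exp_nonneg _)]
  refine (chiSq_real_le_le_exp_mul k (neg_nonpos.mpr hu) _).trans ?_
  rw [show 1 - 2 * -u = 1 + 2 * u by ring, rpow_def_of_pos (by linarith), ← exp_add, exp_le_exp]
  have hlog := sub_sq_div_two_le_log_one_add (mul_nonneg zero_le_two hu)
  linarith [mul_le_mul_of_nonneg_left hlog (Nat.cast_nonneg k : (0 : ℝ) ≤ k)]

lemma chiSq_upper_tail (k : ℕ) {u : ℝ} (hu : 0 ≤ u) :
    chiSq k {q | k * (1 + 2 * u + 2 * u ^ 2) ≤ q} ≤ ENNReal.ofReal (exp (-(k * u ^ 2))) := by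
  have h₁ : 0 < 1 + 2 * u := by linarith
  have h₁₂ : 1 - 2 * (u / (1 + 2 * u)) = (1 + 2 * u)⁻¹ := by
    field_simp
    ring
  rw [ENNReal.le_ofReal_iff_toReal_le (measure_ne_top _ _) (exp_nonneg _)]
  refine (chiSq_real_ge_le_exp_mul k (t := u / (1 + 2 * u)) (by positivity)
    (by rw [div_lt_iff₀ h₁]; linarith) _).trans ?_
  rw [h₁₂, rpow_def_of_pos (by positivity), Real.log_inv, ← exp_add, exp_le_exp]
  have hlog : Real.log (1 + 2 * u) ≤ 2 * ((u + u ^ 2) / (1 + 2 * u)) := by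
    refine (Real.log_le_sub_inv_div_two (by linarith)).trans_eq ?_
    field_simp
    ring
  have hexp : -(u / (1 + 2 * u)) * (k * (1 + 2 * u + 2 * u ^ 2)) =
      -(k * u ^ 2) - k * ((u + u ^ 2) / (1 + 2 * u)) := by
    field_simp
    ring
  rw [hexp]
  linarith [mul_le_mul_of_nonneg_left hlog (Nat.cast_nonneg k : (0 : ℝ) ≤ k)]

/-- Laurent–Massart tail bounds for the chi-squared distribution with k degrees
of freedom. -/
theorem chiSq_tails (k : ℕ) (hk : 0 < k) (x : ℝ) (hx : 0 < x) :
    chiSq k {q | q / k ≤ 1 - 2 * Real.sqrt (x / k)} ≤ ENNReal.ofReal (Real.exp (-x)) ∧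
    chiSq k {q | 1 + 2 * Real.sqrt (x / k) + 2 * x / k ≤ q / k} ≤
      ENNReal.ofReal (Real.exp (-x)) := by
  have hk₀ : (0 : ℝ) < k := Nat.cast_pos.mpr hk
  obtain ⟨u, hu, rfl⟩ : ∃ u, 0 ≤ u ∧ k * u ^ 2 = x :=
    ⟨√(x / k), sqrt_nonneg _, by rw [sq_sqrt (by positivity)]; field_simp⟩
  have hu' : √(k * u ^ 2 / k) = u := by
    rw [mul_div_cancel_left₀ _ hk₀.ne', sqrt_sq hu]
  have hlower : {q : ℝ | q / k ≤ 1 - 2 * u} = {q | q ≤ k * (1 - 2 * u)} :=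
    ext fun q ↦ div_le_iff₀' hk₀
  have hupper : {q : ℝ | 1 + 2 * u + 2 * (k * u ^ 2) / k ≤ q / k} =
      {q | k * (1 + 2 * u + 2 * u ^ 2) ≤ q} := by
    ext q
    simp only [mem_ofPred_eq, le_div_iff₀' hk₀, mul_div_assoc, mul_div_cancel_left₀ _ hk₀.ne']
  rw [hu', hlower, hupper]
  exact ⟨chiSq_lower_tail k hu, chiSq_upper_tail k hu⟩
end

section
/- Completeness of noisy-projection norm verification: Let x ∈ ℝ^d with ‖x‖ ≤ 1, let W ∈ ℝ^{k×d} have i.i.d. entries N(0,1/k), and let v = Wx + n where n ~ N(0, Sσ_v²I_k) is independent of W (modeling the aggregated noise of S servers). If τ ≥ √((1/k + Sσ_v²)(k + 2ln(1/β) + 2√(k·ln(1/β)))), then Pr[‖v‖ ≥ τ] ≤ β. -/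
open MeasureTheory ProbabilityTheory ENNReal

/-!
Each coordinate `vᵢ = ∑ⱼ Wᵢⱼ xⱼ + nᵢ` is a sum of independent centred Gaussians, hence
`N(0, ‖x‖²/k + Sσ_v²)`, and distinct coordinates are independent; so `‖v‖²` is `(‖x‖²/k + Sσ_v²)`
times a `χ²_k` variable `Q`. As `‖x‖ ≤ 1` that factor is at most `1/k + Sσ_v²`, and the threshold
is then the Laurent–Massart tail `Pr[Q ≥ k + 2t + 2√(kt)] ≤ e^{-t}` with `t = log (1/β)`,
obtained by a Chernoff bound on the moment generating function `(1 - 2θ)^{-k/2}` of `Q`.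
-/

open MeasureTheory ProbabilityTheory Real
open scoped NNReal

instance {k d : ℕ} (v : ℝ≥0) : IsProbabilityMeasure (gaussMat k d v) := by
  unfold gaussMat; infer_instance

instance {d : ℕ} (μ : Fin d → ℝ) (v : ℝ≥0) : IsProbabilityMeasure (gaussVec d μ v) := by
  unfold gaussVec; infer_instance

section GaussianLaws

variable {ι : Type*} [Fintype ι]

lemma map_sum_pi_gaussianReal (m : ι → ℝ) (v : ι → ℝ≥0) :
    (Measure.pi fun i => gaussianReal (m i) (v i)).map (fun p => ∑ i, p i) =
      gaussianReal (∑ i, m i) (∑ i, v i) := by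
  refine Measure.ext_of_charFun (funext fun t => ?_)
  simp only [charFun_map_sum_pi_eq_prod, Finset.prod_apply, charFun_gaussianReal,
    ← Complex.exp_sum]
  push_cast
  congr 1
  rw [Finset.mul_sum, Finset.sum_mul, Finset.sum_mul, Finset.sum_div, ← Finset.sum_sub_distrib]

lemma map_dotProduct_pi_gaussianReal (v : ℝ≥0) (x : ι → ℝ) :
    (Measure.pi fun _ : ι => gaussianReal 0 v).map (fun r => ∑ j, r j * x j) =
      gaussianReal 0 ((∑ j, x j ^ 2).toNNReal * v) := by
  have hcomp : (fun r : ι → ℝ => ∑ j, r j * x j) = (fun p => ∑ j, p j) ∘ fun r j => r j * x j :=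
    rfl
  rw [hcomp, ← Measure.map_map (by fun_prop) (by fun_prop),
    Measure.pi_map_pi fun j => (measurable_mul_const (x j)).aemeasurable]
  simp only [gaussianReal_map_mul_const, mul_zero]
  rw [map_sum_pi_gaussianReal, Finset.sum_const_zero]
  congr 1
  ext
  simp [Finset.sum_mul, Real.coe_toNNReal _ (Finset.sum_nonneg fun j _ => sq_nonneg (x j))]

lemma map_dotProduct_add_gaussianReal (a b : ℝ≥0) (m : ℝ) (x : ι → ℝ) :
    ((Measure.pi fun _ : ι => gaussianReal 0 a).prod (gaussianReal m b)).map
        (fun p => ∑ j, p.1 j * x j + p.2) =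
      gaussianReal m ((∑ j, x j ^ 2).toNNReal * a + b) := by
  have hcomp : (fun p : (ι → ℝ) × ℝ => ∑ j, p.1 j * x j + p.2) =
      (fun q : ℝ × ℝ => q.1 + q.2) ∘ Prod.map (fun r : ι → ℝ => ∑ j, r j * x j) id := rfl
  rw [hcomp, ← Measure.map_map (by fun_prop) (by fun_prop),
    ← Measure.map_prod_map _ _ (by fun_prop) measurable_id, Measure.map_id,
    map_dotProduct_pi_gaussianReal, ← Measure.conv, gaussianReal_conv_gaussianReal, zero_add]

end GaussianLaws

lemma map_gaussMat_prod_gaussVec {k d : ℕ} (a b : ℝ≥0) (m : Fin k → ℝ) (x : Fin d → ℝ) :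
    ((gaussMat k d a).prod (gaussVec k m b)).map (fun p i => matVec p.1 x i + p.2 i) =
      Measure.pi fun i => gaussianReal (m i) ((∑ j, x j ^ 2).toNNReal * a + b) := by
  have hcomp : (fun p i => matVec p.1 x i + p.2 i) ∘
        MeasurableEquiv.arrowProdEquivProdArrow (Fin d → ℝ) ℝ (Fin k) =
      fun q i => (fun p : (Fin d → ℝ) × ℝ => ∑ j, p.1 j * x j + p.2) (q i) := rfl
  rw [gaussMat, gaussVec, ← (measurePreserving_arrowProdEquivProdArrow _ _ _ _ _).map_eq,
    Measure.map_map (by unfold matVec; fun_prop) (MeasurableEquiv.measurable _), hcomp]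
  refine (Measure.pi_map_pi (f := fun _ (p : (Fin d → ℝ) × ℝ) => ∑ j, p.1 j * x j + p.2)
    fun _ => by fun_prop).trans ?_
  simp only [map_dotProduct_add_gaussianReal]

lemma lintegral_fintype_prod_eq_prod {ι : Type*} [Fintype ι] {α : ι → Type*}
    [∀ i, MeasurableSpace (α i)] (μ : ∀ i, Measure (α i)) [∀ i, IsProbabilityMeasure (μ i)]
    {f : ∀ i, α i → ℝ≥0∞} (hf : ∀ i, Measurable (f i)) :
    ∫⁻ x, ∏ i, f i (x i) ∂Measure.pi μ = ∏ i, ∫⁻ a, f i a ∂μ i := by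
  rw [lintegral_prod_eq_prod_lintegral_of_indepFun _ _
    (iIndepFun_pi fun i => (hf i).aemeasurable) fun i => (hf i).comp (measurable_pi_apply i)]
  exact Finset.prod_congr rfl fun i _ => (measurePreserving_eval μ i).lintegral_comp (hf i)

lemma lintegral_exp_mul_sq_gaussianReal (u : ℝ≥0) {θ : ℝ} (h : 2 * θ * u < 1) :
    ∫⁻ y, ENNReal.ofReal (exp (θ * y ^ 2)) ∂gaussianReal 0 u =
      ENNReal.ofReal (√(1 - 2 * θ * u))⁻¹ := by
  rcases eq_zero_or_pos u with rfl | hu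
  · simp [gaussianReal_zero_var]
  have hb : 0 < (2 * (u : ℝ))⁻¹ - θ := by
    rw [sub_pos, ← one_div, lt_div_iff₀ (by positivity)]
    linarith
  have hdensity : ∀ y : ℝ, gaussianPDF 0 u y * ENNReal.ofReal (exp (θ * y ^ 2)) =
      ENNReal.ofReal ((√(2 * π * u))⁻¹ * exp (-((2 * (u : ℝ))⁻¹ - θ) * y ^ 2)) := by
    intro y
    rw [gaussianPDF, gaussianPDFReal, ← ENNReal.ofReal_mul (by positivity), mul_assoc,
      ← exp_add]
    congr 3
    field_simp
    ring
  rw [gaussianReal_of_var_ne_zero _ hu.ne',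
    lintegral_withDensity_eq_lintegral_mul _ (measurable_gaussianPDF 0 u) (by fun_prop)]
  simp only [Pi.mul_apply, hdensity]
  rw [← ofReal_integral_eq_lintegral_ofReal ((integrable_exp_neg_mul_sq hb).const_mul _)
    (.of_forall fun y => by positivity), integral_const_mul, integral_gaussian,
    ← sqrt_inv, ← sqrt_mul (by positivity), ← sqrt_inv]
  congr 2
  field_simp

lemma lintegral_exp_mul_chiSq (k : ℕ) {θ : ℝ} (h : 2 * θ < 1) :
    ∫⁻ q, ENNReal.ofReal (exp (θ * q)) ∂chiSq k = ENNReal.ofReal (√(1 - 2 * θ))⁻¹ ^ k := by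
  have hprod : ∀ g : Fin k → ℝ, ENNReal.ofReal (exp (θ * ∑ i, g i ^ 2)) =
      ∏ i, ENNReal.ofReal (exp (θ * g i ^ 2)) := fun g => by
    rw [Finset.mul_sum, exp_sum, ENNReal.ofReal_prod_of_nonneg fun i _ => (exp_pos _).le]
  rw [chiSq, lintegral_map (by fun_prop) (by fun_prop)]
  simp only [hprod]
  rw [lintegral_fintype_prod_eq_prod (f := fun _ y => ENNReal.ofReal (exp (θ * y ^ 2))) _
    fun _ => by fun_prop]
  simp [lintegral_exp_mul_sq_gaussianReal 1 (by simpa using h)]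

lemma chiSq_Ici_le_exp_mul_mgf {k : ℕ} (a : ℝ) {θ : ℝ} (hθ : 0 ≤ θ) (h : 2 * θ < 1) :
    chiSq k (Set.Ici a) ≤ ENNReal.ofReal (exp (-(θ * a)) / √(1 - 2 * θ) ^ k) := by
  have hsub : Set.Ici a ⊆ {q | ENNReal.ofReal (exp (θ * a)) ≤ ENNReal.ofReal (exp (θ * q))} :=
    fun q hq => ENNReal.ofReal_le_ofReal (exp_le_exp.2 (mul_le_mul_of_nonneg_left hq hθ))
  calc chiSq k (Set.Ici a)
      ≤ (∫⁻ q, ENNReal.ofReal (exp (θ * q)) ∂chiSq k) / ENNReal.ofReal (exp (θ * a)) :=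
        (measure_mono hsub).trans (meas_ge_le_lintegral_div (by fun_prop)
          (by simp [exp_pos]) ENNReal.ofReal_ne_top)
    _ = ENNReal.ofReal (exp (-(θ * a)) / √(1 - 2 * θ) ^ k) := by
        rw [lintegral_exp_mul_chiSq k h, ← ENNReal.ofReal_pow (by positivity),
          ← ENNReal.ofReal_div_of_pos (exp_pos _), exp_neg, inv_pow, div_eq_mul_inv, div_eq_mul_inv, mul_comm]

lemma chiSq_Ici_le_exp_neg {k : ℕ} (hk : 0 < k) {t : ℝ} (ht : 0 ≤ t) :
    chiSq k (Set.Ici (k + 2 * t + 2 * √(k * t))) ≤ ENNReal.ofReal (exp (-t)) := by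
  have hK : (0 : ℝ) < k := Nat.cast_pos.2 hk
  set s := √(t / k)
  have hs0 : 0 ≤ s := sqrt_nonneg _
  have ht_eq : t = k * s ^ 2 := by rw [sq_sqrt (by positivity)]; field_simp
  have hsqrt : √(k * t) = k * s := by
    rw [ht_eq, ← mul_assoc, ← sq, sqrt_mul (sq_nonneg _), sqrt_sq hK.le, sqrt_sq hs0]
  -- with `θ = (s + s²) / p` the Chernoff exponent is `-k (s + s²) + (k/2) log p ≤ -k s²`
  set p := 1 + 2 * s + 2 * s ^ 2
  have hp0 : 0 < p := by positivity
  have hθ0 : 0 ≤ (s + s ^ 2) / p := by positivity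
  have h2θ : 1 - 2 * ((s + s ^ 2) / p) = 1 / p := by field_simp; ring
  have hθA : (s + s ^ 2) / p * (k + 2 * t + 2 * √(k * t)) = k * (s + s ^ 2) := by
    rw [hsqrt, ht_eq]; field_simp; ring
  have hpexp : √p ≤ exp s := by
    rw [sqrt_le_left (exp_pos s).le, sq, ← exp_add, ← two_mul]
    nlinarith [quadratic_le_exp_of_nonneg (by positivity : 0 ≤ 2 * s)]
  refine (chiSq_Ici_le_exp_mul_mgf _ hθ0 (by linarith [h2θ, one_div_pos.2 hp0])).trans
    (ENNReal.ofReal_le_ofReal ?_)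
  rw [hθA, h2θ, sqrt_div' _ hp0.le, sqrt_one, one_div_pow, div_div_eq_mul_div, div_one]
  calc exp (-(k * (s + s ^ 2))) * √p ^ k
      ≤ exp (-(k * (s + s ^ 2))) * exp s ^ k := by gcongr
    _ = exp (-t) := by rw [← exp_nat_mul, ← exp_add, ht_eq]; ring_nf

lemma map_sum_sq_pi_gaussianReal (k : ℕ) (u : ℝ≥0) :
    (Measure.pi fun _ : Fin k => gaussianReal 0 u).map (fun y => ∑ i, y i ^ 2) =
      (chiSq k).map (fun q => (u : ℝ) * q) := by
  have hscale : (Measure.pi fun _ : Fin k => gaussianReal 0 1).map (fun g i => √u * g i) =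
      Measure.pi fun _ => gaussianReal 0 u := by
    rw [Measure.pi_map_pi fun _ => (measurable_const_mul _).aemeasurable]
    simp only [gaussianReal_map_const_mul, mul_zero, mul_one]
    congr
    ext
    simp
  rw [← hscale, chiSq, Measure.map_map (by fun_prop) (by fun_prop),
    Measure.map_map (by fun_prop) (by fun_prop)]
  congr 1
  funext g
  simp [mul_pow, Finset.mul_sum]

lemma setOf_le_vnorm {k : ℕ} {τ : ℝ} (hτ : 0 ≤ τ) :
    {y : Fin k → ℝ | τ ≤ vnorm y} = (fun y => ∑ i, y i ^ 2) ⁻¹' Set.Ici (τ ^ 2) := by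
  ext y
  exact le_sqrt hτ (Finset.sum_nonneg fun i _ => sq_nonneg (y i))

lemma pi_gaussianReal_setOf_le_vnorm_le {k : ℕ} (hk : 0 < k) {u : ℝ≥0} {c t τ : ℝ} (hc : 0 < c)
    (hu : u ≤ c) (ht : 0 ≤ t) (hτ : √(c * (k + 2 * t + 2 * √(k * t))) ≤ τ) :
    (Measure.pi fun _ : Fin k => gaussianReal 0 u) {y | τ ≤ vnorm y} ≤
      ENNReal.ofReal (exp (-t)) := by
  set A : ℝ := k + 2 * t + 2 * √(k * t)
  have hA : 0 < A := by positivity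
  have hτ0 : 0 ≤ τ := (sqrt_nonneg _).trans hτ
  have hcA : c * A ≤ τ ^ 2 := (sqrt_le_left hτ0).1 hτ
  rw [setOf_le_vnorm hτ0, ← Measure.map_apply (by fun_prop) measurableSet_Ici,
    map_sum_sq_pi_gaussianReal, Measure.map_apply (by fun_prop) measurableSet_Ici]
  refine (measure_mono fun q hq => ?_).trans (chiSq_Ici_le_exp_neg hk ht)
  simp only [Set.mem_preimage, Set.mem_Ici] at hq ⊢
  by_contra! hqA
  have hq0 : 0 < q := by nlinarith [u.2]
  nlinarith

/-- Completeness of noisy-projection norm verification: for ‖x‖ ≤ 1 and a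
suitably large threshold τ, the noisy projection v = Wx + n has ‖v‖ < τ except
with probability β. -/
theorem norm_verification_completeness (k d S : ℕ) (hk : 0 < k) (σv τ β : ℝ)
    (hβ : 0 < β) (x : Fin d → ℝ) (hx : vnorm x ≤ 1)
    (hτ : τ ≥ Real.sqrt ((1 / k + S * σv ^ 2) *
      (k + 2 * Real.log (1 / β) + 2 * Real.sqrt (k * Real.log (1 / β))))) :
    ((gaussMat k d ((k : NNReal))⁻¹).prod
        (gaussVec k (fun _ => 0) ((S * σv ^ 2).toNNReal)))
      {p | τ ≤ vnorm (fun i => matVec p.1 x i + p.2 i)} ≤ ENNReal.ofReal β := by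
  by_cases hβ1 : 1 ≤ β
  · exact prob_le_one.trans (ENNReal.one_le_ofReal.2 hβ1)
  have ht : 0 ≤ Real.log (1 / β) := Real.log_nonneg (by rw [le_div_iff₀ hβ]; linarith)
  have hvar : (((∑ j, x j ^ 2).toNNReal * (k : ℝ≥0)⁻¹ + (S * σv ^ 2).toNNReal : ℝ≥0) : ℝ) ≤
      1 / k + S * σv ^ 2 := by
    have hsq : ∑ j, x j ^ 2 ≤ 1 := sqrt_le_one.1 hx
    push_cast
    rw [Real.coe_toNNReal _ (Finset.sum_nonneg fun j _ => sq_nonneg (x j)),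
      Real.coe_toNNReal _ (by positivity), one_div]
    gcongr
    exact mul_le_of_le_one_left (by positivity) hsq
  have hlaw :=
    map_gaussMat_prod_gaussVec ((k : ℝ≥0))⁻¹ (S * σv ^ 2).toNNReal (fun _ : Fin k => 0) x
  rw [← Set.preimage_ofPred_eq (p := fun y => τ ≤ vnorm y)
      (f := fun p : (Fin k → Fin d → ℝ) × (Fin k → ℝ) => fun i => matVec p.1 x i + p.2 i),
    ← Measure.map_apply (by unfold matVec; fun_prop)
    (measurableSet_le measurable_const (by unfold vnorm; fun_prop)), hlaw]
  calc _ ≤ ENNReal.ofReal (exp (-Real.log (1 / β))) :=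
        pi_gaussianReal_setOf_le_vnorm_le hk (by positivity) hvar ht hτ
    _ = ENNReal.ofReal β := by rw [one_div, Real.log_inv, neg_neg, Real.exp_log hβ]
end
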